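/- Let E be a real separable Hilbert space, δ > 0, T > 0, β ≥ 0, and let m be a finite Borel measure on the interval [-δ,0]. Let X : [-δ,T] → E be strongly measurable with ∫_{-δ}^{T} ‖X(s)‖_E² ds < ∞ and with X(s) = 0 for almost every s ∈ [-δ,0). Then ∫_{0}^{T} e^{-βt} ‖X_δ(t)‖_E² dt ≤ m([-δ,0])² · ∫_{0}^{T} e^{-βt} ‖X(t)‖_E² dt. -/

import Mathlib

/-!
By Cauchy–Schwarz for the finite measure `m`, `‖X_δ(s)‖² ≤ m(univ) ∫ ‖X(s + r)‖² m(dr)`.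
Integrating against `e^{-βs}` and exchanging the integrals (Tonelli) reduces the claim to
`∫_0^T e^{-βs} ‖X(s + r)‖² ds ≤ ∫_0^T e^{-βs} ‖X(s)‖² ds` for each delay `r ≤ 0`: after the
substitution `u = s + r` the window moves left, where `X` vanishes, and the weight
`e^{-β(u - r)}` only decreases. The estimates are carried out in `ℝ≥0∞`, so that
integrability and the junk value of non-integrable Bochner integrals never need tracking.
-/

open MeasureTheory Set
open scoped ENNReal NNReal

theorem sq_lintegral_le_measure_univ_mul {α : Type*} [MeasurableSpace α] {μ : Measure α}
    {g : α → ℝ≥0∞} (hg : AEMeasurable g μ) :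
    (∫⁻ x, g x ∂μ) ^ 2 ≤ μ univ * ∫⁻ x, g x ^ 2 ∂μ := by
  have hholder := ENNReal.lintegral_mul_le_Lp_mul_Lq μ Real.HolderConjugate.two_two hg
    aemeasurable_const (g := 1)
  simp only [Pi.mul_apply, Pi.one_apply, mul_one, ENNReal.one_rpow, lintegral_const, one_mul]
    at hholder
  calc (∫⁻ x, g x ∂μ) ^ 2
      ≤ ((∫⁻ x, g x ^ (2 : ℝ) ∂μ) ^ (1 / 2 : ℝ) * μ univ ^ (1 / 2 : ℝ)) ^ 2 := by gcongr
    _ = μ univ * ∫⁻ x, g x ^ 2 ∂μ := by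
      rw [← ENNReal.mul_rpow_of_nonneg _ _ (by norm_num), ← ENNReal.rpow_natCast,
        ← ENNReal.rpow_mul]
      norm_num [mul_comm]

theorem enorm_integral_sq_le_measure_univ_mul {α F : Type*} [MeasurableSpace α]
    [NormedAddCommGroup F] [NormedSpace ℝ F] (μ : Measure α) (f : α → F) :
    ‖∫ x, f x ∂μ‖ₑ ^ 2 ≤ μ univ * ∫⁻ x, ‖f x‖ₑ ^ 2 ∂μ := by
  by_cases hf : AEStronglyMeasurable f μ
  · calc ‖∫ x, f x ∂μ‖ₑ ^ 2 ≤ (∫⁻ x, ‖f x‖ₑ ∂μ) ^ 2 := by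
          gcongr; exact enorm_integral_le_lintegral_enorm f
      _ ≤ μ univ * ∫⁻ x, ‖f x‖ₑ ^ 2 ∂μ := sq_lintegral_le_measure_univ_mul hf.enorm
  · simp [integral_non_aestronglyMeasurable hf]

theorem integral_le_toReal_lintegral_ofReal {α : Type*} [MeasurableSpace α] {μ : Measure α}
    {g : α → ℝ} (hg : 0 ≤ᵐ[μ] g) :
    ∫ x, g x ∂μ ≤ (∫⁻ x, ENNReal.ofReal (g x) ∂μ).toReal := by
  by_cases hgm : AEStronglyMeasurable g μ
  · exact (integral_eq_lintegral_of_nonneg_ae hg hgm).le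
  · simp [integral_non_aestronglyMeasurable hgm]

theorem setLIntegral_Icc_antitone_mul_comp_add_le {w g : ℝ → ℝ≥0∞} (hw : Antitone w)
    (hg : ∀ᵐ u, u < 0 → g u = 0) {r : ℝ} (hr : r ≤ 0) (T : ℝ) :
    ∫⁻ s in Icc 0 T, w s * g (s + r) ≤ ∫⁻ s in Icc 0 T, w s * g s := by
  set φ := (Icc 0 T).indicator w
  have hshift : ∀ᵐ u, φ (u - r) * g u ≤ φ u * g u := by
    filter_upwards [hg] with u hu
    rcases lt_or_ge u 0 with hneg | hnonneg
    · simp [hu hneg]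
    by_cases hmem : u - r ∈ Icc 0 T
    · have hu : u ∈ Icc 0 T := ⟨hnonneg, by linarith [hmem.2]⟩
      simp only [φ, indicator_of_mem hmem, indicator_of_mem hu]
      gcongr
      exact hw (by linarith)
    · simp [φ, indicator_of_notMem hmem]
  calc ∫⁻ s in Icc 0 T, w s * g (s + r)
      = ∫⁻ s, φ (s + r - r) * g (s + r) := by
        simp only [add_sub_cancel_right, φ, ← lintegral_indicator measurableSet_Icc,
          indicator_mul_left]
    _ = ∫⁻ u, φ (u - r) * g u := lintegral_add_right_eq_self (fun u => φ (u - r) * g u) r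
    _ ≤ ∫⁻ u, φ u * g u := lintegral_mono_ae hshift
    _ = ∫⁻ s in Icc 0 T, w s * g s := by
        simp only [φ, ← lintegral_indicator measurableSet_Icc, indicator_mul_left]

section DelayedAverage

variable {E : Type*} [NormedAddCommGroup E] [NormedSpace ℝ E]
  (m : Measure ℝ) [IsFiniteMeasure m] {f : ℝ → E}

theorem setLIntegral_mul_enorm_integral_comp_add_sq_le (hm : ∀ᵐ r ∂m, r ≤ 0)
    {w : ℝ → ℝ≥0} (hw : Antitone w) (hf : AEStronglyMeasurable f)
    (hf0 : ∀ᵐ u, u < 0 → f u = 0) (T : ℝ) :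
    ∫⁻ s in Icc 0 T, w s * ‖∫ r, f (s + r) ∂m‖ₑ ^ 2
      ≤ m univ ^ 2 * ∫⁻ s in Icc 0 T, w s * ‖f s‖ₑ ^ 2 := by
  have hg0 : ∀ᵐ u, u < 0 → ‖f u‖ₑ ^ 2 = 0 := by
    filter_upwards [hf0] with u hu hneg
    simp [hu hneg]
  have hadd : Measure.QuasiMeasurePreserving (fun p : ℝ × ℝ => p.1 + p.2)
      ((volume.restrict (Icc 0 T)).prod m) volume := by
    simp_rw [add_comm (Prod.fst _)]
    exact (quasiMeasurePreserving_add_swap volume m).mono_left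
      (Measure.restrict_le_self.absolutelyContinuous.prod .rfl)
  have hmeas : AEMeasurable (Function.uncurry fun s r => (w s : ℝ≥0∞) * ‖f (s + r)‖ₑ ^ 2)
      ((volume.restrict (Icc 0 T)).prod m) :=
    (hw.measurable.coe_nnreal_ennreal.comp measurable_fst).aemeasurable.mul
      ((hf.enorm.comp_quasiMeasurePreserving hadd).pow_const 2)
  calc ∫⁻ s in Icc 0 T, w s * ‖∫ r, f (s + r) ∂m‖ₑ ^ 2
      ≤ ∫⁻ s in Icc 0 T, w s * (m univ * ∫⁻ r, ‖f (s + r)‖ₑ ^ 2 ∂m) := by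
        gcongr with s
        exact enorm_integral_sq_le_measure_univ_mul m _
    _ = m univ * ∫⁻ r, (∫⁻ s in Icc 0 T, w s * ‖f (s + r)‖ₑ ^ 2) ∂m := by
        simp_rw [mul_left_comm (w _ : ℝ≥0∞), ← lintegral_const_mul' _ _ ENNReal.coe_ne_top]
        rw [lintegral_const_mul' _ _ (measure_ne_top _ _), lintegral_lintegral_swap hmeas]
    _ ≤ m univ * ∫⁻ _r, (∫⁻ s in Icc 0 T, w s * ‖f s‖ₑ ^ 2) ∂m := by
        gcongr 1
        exact lintegral_mono_ae (hm.mono fun r hr => setLIntegral_Icc_antitone_mul_comp_add_le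
          (fun _ _ h => ENNReal.coe_le_coe.2 (hw h)) hg0 hr T)
    _ = m univ ^ 2 * ∫⁻ s in Icc 0 T, w s * ‖f s‖ₑ ^ 2 := by
        rw [lintegral_const, sq, mul_assoc, mul_comm (∫⁻ _ in _, _)]

theorem setIntegral_exp_mul_norm_integral_comp_add_sq_le (hm : ∀ᵐ r ∂m, r ≤ 0)
    {β : ℝ} (hβ : 0 ≤ β) (hf : AEStronglyMeasurable f) (hf0 : ∀ᵐ u, u < 0 → f u = 0)
    {T : ℝ} (hf_int : IntegrableOn (fun s => ‖f s‖ ^ 2) (Icc 0 T)) :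
    ∫ s in Icc 0 T, Real.exp (-β * s) * ‖∫ r, f (s + r) ∂m‖ ^ 2
      ≤ (m univ).toReal ^ 2 * ∫ s in Icc 0 T, Real.exp (-β * s) * ‖f s‖ ^ 2 := by
  have hw : Antitone fun s => (Real.exp (-β * s)).toNNReal := fun s t hst =>
    Real.toNNReal_le_toNNReal (Real.exp_le_exp.2 (by nlinarith))
  have hofReal : ∀ (s : ℝ) (v : E), ENNReal.ofReal (Real.exp (-β * s) * ‖v‖ ^ 2)
      = (Real.exp (-β * s)).toNNReal * ‖v‖ₑ ^ 2 := fun s v => by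
    rw [ENNReal.ofReal_mul (Real.exp_nonneg _), ENNReal.ofReal_pow (norm_nonneg _),
      ofReal_norm, ENNReal.ofReal]
  have hint : IntegrableOn (fun s => Real.exp (-β * s) * ‖f s‖ ^ 2) (Icc 0 T) :=
    hf_int.continuousOn_mul (by fun_prop) isCompact_Icc
  have key := setLIntegral_mul_enorm_integral_comp_add_sq_le m hm hw hf hf0 T
  simp_rw [← hofReal, ← ofReal_integral_eq_lintegral_ofReal hint
    (ae_of_all _ fun s => by positivity)] at key
  calc ∫ s in Icc 0 T, Real.exp (-β * s) * ‖∫ r, f (s + r) ∂m‖ ^ 2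
      ≤ (∫⁻ s in Icc 0 T, ENNReal.ofReal (Real.exp (-β * s) * ‖∫ r, f (s + r) ∂m‖ ^ 2)).toReal :=
        integral_le_toReal_lintegral_ofReal (ae_of_all _ fun s => by positivity)
    _ ≤ (m univ ^ 2 * ENNReal.ofReal (∫ s in Icc 0 T, Real.exp (-β * s) * ‖f s‖ ^ 2)).toReal :=
        ENNReal.toReal_mono (by finiteness) key
    _ = (m univ).toReal ^ 2 * ∫ s in Icc 0 T, Real.exp (-β * s) * ‖f s‖ ^ 2 := by
        rw [ENNReal.toReal_mul, ENNReal.toReal_pow,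
          ENNReal.toReal_ofReal (setIntegral_nonneg measurableSet_Icc fun s _ => by positivity)]

end DelayedAverage

theorem delayed_moving_average_exponential_estimate_general
    {E : Type*} [NormedAddCommGroup E] [InnerProductSpace ℝ E]
    (δ T β : ℝ) (hδ : 0 < δ) (hβ : 0 ≤ β)
    (m : Measure ℝ) [IsFiniteMeasure m] (hm : m (Set.Icc (-δ) 0)ᶜ = 0)
    (X : ℝ → E)
    (hX_meas : AEStronglyMeasurable X (volume.restrict (Set.Icc (-δ) T)))
    (hX_int : IntegrableOn (fun s => ‖X s‖ ^ 2) (Set.Icc (-δ) T))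
    (hX_zero : ∀ᵐ s ∂(volume.restrict (Set.Ico (-δ) 0)), X s = 0) :
    ∫ s in Set.Icc 0 T, Real.exp (-β * s) * ‖∫ r, X (s + r) ∂m‖ ^ 2
      ≤ (m (Set.Icc (-δ) 0)).toReal ^ 2
          * ∫ s in Set.Icc 0 T, Real.exp (-β * s) * ‖X s‖ ^ 2 := by
  have hm_ae : ∀ᵐ r ∂m, r ∈ Icc (-δ) 0 := mem_ae_iff.2 hm
  set f := (Icc (-δ) T).indicator X
  have hfX : ∀ u ∈ Icc (-δ) T, f u = X u := fun u hu => indicator_of_mem hu X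
  have hfX₀ : ∀ s ∈ Icc 0 T, f s = X s := fun s hs => hfX s ⟨by linarith [hs.1], hs.2⟩
  have hf0 : ∀ᵐ u, u < 0 → f u = 0 := by
    filter_upwards [(ae_restrict_iff' measurableSet_Ico).1 hX_zero] with u hu hneg
    by_cases hmem : u ∈ Icc (-δ) T
    · rw [hfX u hmem, hu ⟨hmem.1, hneg⟩]
    · exact indicator_of_notMem hmem X
  have hXf_avg : ∀ s ∈ Icc 0 T, ∫ r, X (s + r) ∂m = ∫ r, f (s + r) ∂m := fun s hs =>
    integral_congr_ae <| hm_ae.mono fun r hr =>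
      (hfX _ ⟨by linarith [hs.1, hr.1], by linarith [hs.2, hr.2]⟩).symm
  have hf_int : IntegrableOn (fun s => ‖f s‖ ^ 2) (Icc 0 T) :=
    (hX_int.mono_set (Icc_subset_Icc_left (by linarith))).congr_fun
      (fun s hs => by rw [hfX₀ s hs]) measurableSet_Icc
  calc ∫ s in Icc 0 T, Real.exp (-β * s) * ‖∫ r, X (s + r) ∂m‖ ^ 2
      = ∫ s in Icc 0 T, Real.exp (-β * s) * ‖∫ r, f (s + r) ∂m‖ ^ 2 :=
        setIntegral_congr_fun measurableSet_Icc fun s hs => by rw [hXf_avg s hs]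
    _ ≤ (m univ).toReal ^ 2 * ∫ s in Icc 0 T, Real.exp (-β * s) * ‖f s‖ ^ 2 :=
        setIntegral_exp_mul_norm_integral_comp_add_sq_le m (hm_ae.mono fun r hr => hr.2) hβ
          ((aestronglyMeasurable_indicator_iff measurableSet_Icc).2 hX_meas) hf0 hf_int
    _ = (m (Icc (-δ) 0)).toReal ^ 2 * ∫ s in Icc 0 T, Real.exp (-β * s) * ‖X s‖ ^ 2 := by
        rw [measure_congr (ae_eq_univ.2 hm), setIntegral_congr_fun measurableSet_Icc
          fun s hs => by rw [hfX₀ s hs]]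

/-- key contraction estimate from the Appendix proof of Theorem 3.4.
For a finite Borel measure `m` supported on `[-δ, 0]` and an `L²` function `X` on `[-δ, T]`
vanishing a.e. on `[-δ, 0)`, the delayed moving average `X_δ(t) = ∫ X(t+s) m(ds)` satisfies
`∫_0^T e^{-βt} ‖X_δ(t)‖² dt ≤ m([-δ,0])² ∫_0^T e^{-βt} ‖X(t)‖² dt`. -/
theorem delayed_moving_average_exponential_estimate
    {E : Type*} [NormedAddCommGroup E] [InnerProductSpace ℝ E] [CompleteSpace E]
    [TopologicalSpace.SeparableSpace E]
    (δ T β : ℝ) (hδ : 0 < δ) (hT : 0 < T) (hβ : 0 ≤ β)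
    (m : Measure ℝ) [IsFiniteMeasure m] (hm : m (Set.Icc (-δ) 0)ᶜ = 0)
    (X : ℝ → E)
    (hX_meas : AEStronglyMeasurable X (volume.restrict (Set.Icc (-δ) T)))
    (hX_int : IntegrableOn (fun s => ‖X s‖ ^ 2) (Set.Icc (-δ) T))
    (hX_zero : ∀ᵐ s ∂(volume.restrict (Set.Ico (-δ) 0)), X s = 0) :
    ∫ s in Set.Icc 0 T, Real.exp (-β * s) * ‖∫ r, X (s + r) ∂m‖ ^ 2
      ≤ (m (Set.Icc (-δ) 0)).toReal ^ 2
          * ∫ s in Set.Icc 0 T, Real.exp (-β * s) * ‖X s‖ ^ 2 :=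
  delayed_moving_average_exponential_estimate_general δ T β hδ hβ m hm X hX_meas hX_int hX_zero
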